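/- Let K be a nonempty finite type and, for each κ ∈ K, let I κ and J κ be nonempty finite types; set Ω = Σ κ, (I κ × J κ). Let ρ : Matrix Ω Ω ℂ be positive semidefinite with trace 1 and block diagonal, ρ = ∑_κ p_κ ρ̂_κ, where p_κ ≥ 0, ∑_κ p_κ = 1, each ρ_κ is a positive semidefinite trace-1 matrix on I κ × J κ, and ρ̂_κ denotes its embedding into block κ of Ω (zero outside block κ). Then the robustness of ρ equals the weighted sum of the bipartite robustnesses of its blocks: sInf {t : ℝ | t ≥ 0 ∧ ∃ block-separable σ on Ω, (1/(1+t)) • (ρ + t • σ) is block-separable} = ∑_κ p_κ · sInf {t : ℝ | t ≥ 0 ∧ ∃ Kronecker-separable σ_κ on I κ × J κ, (1/(1+t)) • (ρ_κ + t • σ_κ) is Kronecker-separable}. -/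

import Mathlib

open scoped BigOperators ComplexOrder Kronecker

/-- A matrix on `Ω = Σ κ, I κ × J κ` is block-separable if it is a finite convex
combination of rank-one projections onto unit vectors each supported in a single
block and there of product form. -/
def BlockSep {K : Type*} [Fintype K] {I J : K → Type*}
    [∀ κ, Fintype (I κ)] [∀ κ, Fintype (J κ)]
    (ρ : Matrix ((κ : K) × (I κ × J κ)) ((κ : K) × (I κ × J κ)) ℂ) : Prop :=
  ∃ (n : ℕ) (lam : Fin n → ℝ) (v : Fin n → ((κ : K) × (I κ × J κ)) → ℂ),
    (∀ t, 0 ≤ lam t) ∧ (∑ t, lam t = 1) ∧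
    (∀ t, ∑ a, Complex.normSq (v t a) = 1) ∧
    (∀ t, ∃ (κ : K) (x : I κ → ℂ) (y : J κ → ℂ),
      (∀ (i : I κ) (j : J κ), v t ⟨κ, (i, j)⟩ = x i * y j) ∧
      (∀ κ' : K, κ' ≠ κ → ∀ b : I κ' × J κ', v t ⟨κ', b⟩ = 0)) ∧
    ρ = ∑ t, (lam t : ℂ) • Matrix.of (fun a b => v t a * starRingEnd ℂ (v t b))

/-- A matrix on `I × J` is Kronecker-separable if it is a finite convex combination
of Kronecker products of positive semidefinite trace-one matrices. -/
def KronSep {I J : Type*} [Fintype I] [Fintype J]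
    (ρ : Matrix (I × J) (I × J) ℂ) : Prop :=
  ∃ (n : ℕ) (lam : Fin n → ℝ)
    (A : Fin n → Matrix I I ℂ) (B : Fin n → Matrix J J ℂ),
    (∀ t, 0 ≤ lam t) ∧ (∑ t, lam t = 1) ∧
    (∀ t, (A t).PosSemidef ∧ (A t).trace = 1) ∧
    (∀ t, (B t).PosSemidef ∧ (B t).trace = 1) ∧
    ρ = ∑ t, (lam t : ℂ) • (A t ⊗ₖ B t)

/-- The embedding of a matrix on the block `I κ × J κ` into a matrix on
`Ω = Σ κ, I κ × J κ`, vanishing outside block `κ`. -/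
def embedBlock {K : Type*} [DecidableEq K] {I J : K → Type*} (κ : K)
    (A : Matrix (I κ × J κ) (I κ × J κ) ℂ) :
    Matrix ((κ' : K) × (I κ' × J κ')) ((κ' : K) × (I κ' × J κ')) ℂ :=
  Matrix.of fun a b =>
    if h : a.1 = κ ∧ b.1 = κ then A (h.1 ▸ a.2) (h.2 ▸ b.2) else 0

/-!
Both separability notions are "trace one and in a convex cone": `KronSep` for the cone
`kronCone` generated by Kronecker products of states, `BlockSep` for the cone `blockCone`
generated by rank-one projections onto block-product vectors. Writing `D = t • σ`, the
robustness of a state `ρ` is the infimum of `tr D` over cone elements `D` with `ρ + D` again in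
the cone (`robustnessSet`).

The diagonal blocks of an element of `blockCone` lie in `kronCone`, and a block-diagonal matrix
with blocks in `kronCone` lies in `blockCone`. Hence for `ρ = ⊕ p_κ ρ_κ` an admissible `D`
splits into admissible `D_κ / p_κ` for the blocks, with `tr D = ∑ tr D_κ`, and admissible
witnesses for the blocks assemble into one for `ρ`. The block robustnesses are finite by
polarization: products of rank-one projections span all matrices, so every Hermitian matrix
is a difference of two elements of `kronCone`.
-/

open Matrix

section Cone

variable {α : Type*}

lemma posSemidef_of_mem_hull {S : Set (Matrix α α ℂ)} (hS : ∀ g ∈ S, g.PosSemidef)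
    {D : Matrix α α ℂ} (hD : D ∈ PointedCone.hull ℝ S) : D.PosSemidef := by
  induction hD using Submodule.span_induction with
  | mem g hg => exact hS g hg
  | zero => exact .zero
  | add _ _ _ _ h₁ h₂ => exact h₁.add h₂
  | smul c _ _ h => rw [← Nonneg.coe_smul]; exact h.smul c.2

lemma exists_add_mem_hull_of_mem_span {S : Set (Matrix α α ℂ)} (hS : ∀ g ∈ S, g.IsHermitian)
    {M : Matrix α α ℂ} (hM : M.IsHermitian) (hspan : M ∈ Submodule.span ℂ S) :
    ∃ D ∈ PointedCone.hull ℝ S, M + D ∈ PointedCone.hull ℝ S := by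
  obtain ⟨n, c, g, rfl⟩ := Submodule.mem_span_set'.mp hspan
  have hstar : ∑ t, c t • (g t : Matrix α α ℂ) = ∑ t, star (c t) • (g t : Matrix α α ℂ) := by
    simpa only [conjTranspose_sum, conjTranspose_smul, (hS _ (g _).2).eq] using hM.eq.symm
  -- averaging the two expansions leaves the real parts of the coefficients
  have hre : ∑ t, c t • (g t : Matrix α α ℂ) = ∑ t, (c t).re • (g t : Matrix α α ℂ) := by
    calc _ = (2 : ℂ)⁻¹ •
          (∑ t, c t • (g t : Matrix α α ℂ) + ∑ t, star (c t) • (g t : Matrix α α ℂ)) := by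
          rw [← hstar, ← two_smul ℂ, smul_smul, inv_mul_cancel₀ two_ne_zero, one_smul]
      _ = _ := by
          rw [← Finset.sum_add_distrib, Finset.smul_sum]
          refine Finset.sum_congr rfl fun t _ => ?_
          rw [← add_smul, smul_smul, ← Complex.coe_smul, Complex.re_eq_add_conj, Complex.star_def]
          ring_nf
  refine ⟨∑ t, (c t).re⁻ • (g t : Matrix α α ℂ),
    sum_mem fun t _ => (PointedCone.hull ℝ S).smul_mem (negPart_nonneg _)
      (PointedCone.subset_hull (g t).2), ?_⟩
  rw [hre, ← Finset.sum_add_distrib]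
  refine sum_mem fun t _ => ?_
  rw [← add_smul, ← sub_eq_iff_eq_add.mp (posPart_sub_negPart _)]
  exact (PointedCone.hull ℝ S).smul_mem (posPart_nonneg _) (PointedCone.subset_hull (g t).2)

lemma vecMulVec_star_polarization (x y : α → ℂ) :
    vecMulVec x (star y) = ∑ k ∈ Finset.range 4, (Complex.I ^ k / 4) •
      vecMulVec (x + Complex.I ^ k • y) (star (x + Complex.I ^ k • y)) := by
  ext a b
  simp only [Finset.sum_range_succ, Finset.sum_range_zero, Matrix.add_apply, Matrix.smul_apply,
    vecMulVec_apply, Pi.add_apply, Pi.smul_apply, Pi.star_apply, star_add, star_smul,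
    smul_eq_mul, star_pow, Complex.star_def, Complex.conj_I, zero_add]
  ring_nf
  rw [Complex.I_pow_eq_pow_mod 6, Complex.I_pow_eq_pow_mod 9]
  norm_num [Complex.I_sq, Complex.I_pow_three]
  ring

lemma vecMulVec_mem_span_vecMulVec_self_star (x y : α → ℂ) :
    vecMulVec x (star y) ∈
      Submodule.span ℂ (Set.range fun v : α → ℂ => vecMulVec v (star v)) := by
  rw [vecMulVec_star_polarization]
  exact sum_mem fun k _ => Submodule.smul_mem _ _ (Submodule.subset_span ⟨_, rfl⟩)

lemma single_mem_span_vecMulVec_self_star [DecidableEq α] (i j : α) (c : ℂ) :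
    single i j c ∈ Submodule.span ℂ (Set.range fun v : α → ℂ => vecMulVec v (star v)) := by
  have : single i j c = c • vecMulVec (Pi.single i 1) (star (Pi.single j 1)) := by
    rw [Pi.star_single, star_one, ← single_eq_single_vecMulVec_single, smul_single, smul_eq_mul,
      mul_one]
  rw [this]
  exact Submodule.smul_mem _ _ (vecMulVec_mem_span_vecMulVec_self_star _ _)

variable [Fintype α]

lemma exists_convexComb_iff {S : Set (Matrix α α ℂ)} (hS : ∀ g ∈ S, g.trace = 1)
    (ρ : Matrix α α ℂ) :
    (∃ (n : ℕ) (lam : Fin n → ℝ) (g : Fin n → Matrix α α ℂ), (∀ t, 0 ≤ lam t) ∧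
        ∑ t, lam t = 1 ∧ (∀ t, g t ∈ S) ∧ ρ = ∑ t, (lam t : ℂ) • g t) ↔
      ρ ∈ PointedCone.hull ℝ S ∧ ρ.trace = 1 := by
  constructor
  · rintro ⟨n, lam, g, hlam, hsum, hg, rfl⟩
    refine ⟨sum_mem fun t _ => ?_, ?_⟩
    · rw [Complex.coe_smul]
      exact (PointedCone.hull ℝ S).smul_mem (hlam t) (PointedCone.subset_hull (hg t))
    · simp [trace_sum, hS _ (hg _), ← Complex.ofReal_sum, hsum]
  · rintro ⟨hρ, htr⟩
    obtain ⟨n, c, g, rfl⟩ := Submodule.mem_span_set'.mp hρ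
    have hc : ∑ t, c t • (g t : Matrix α α ℂ) = ∑ t, ((c t : ℝ) : ℂ) • (g t : Matrix α α ℂ) := by
      simp [← Nonneg.coe_smul, Complex.coe_smul]
    rw [hc] at htr ⊢
    refine ⟨n, fun t => c t, fun t => g t, fun t => (c t).2, ?_, fun t => (g t).2, rfl⟩
    simp only [trace_sum, trace_smul, hS _ (g _).2, smul_eq_mul, mul_one] at htr
    exact_mod_cast htr

lemma trace_vecMulVec_self_star (v : α → ℂ) :
    (vecMulVec v (star v)).trace = ((∑ a, Complex.normSq (v a) : ℝ) : ℂ) := by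
  simp [trace_vecMulVec, dotProduct, Complex.mul_conj]

lemma vecMulVec_mem_hull_of_smul_mem {V : Set (α → ℂ)} (hV : ∀ (c : ℂ), ∀ v ∈ V, c • v ∈ V)
    {w : α → ℂ} (hw : w ∈ V) :
    vecMulVec w (star w) ∈ PointedCone.hull ℝ
      {vecMulVec v (star v) | (v) (_ : v ∈ V ∧ ∑ a, Complex.normSq (v a) = 1)} := by
  set r := ∑ a, Complex.normSq (w a) with hr
  rcases (Finset.sum_nonneg fun a _ => Complex.normSq_nonneg (w a)).eq_or_lt with h0 | hpos
  · have : w = 0 := funext fun a => Complex.normSq_eq_zero.mp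
      ((Finset.sum_eq_zero_iff_of_nonneg fun a _ => Complex.normSq_nonneg _).mp h0.symm a
        (Finset.mem_univ a))
    simp [this]
  · set c : ℂ := (((Real.sqrt r)⁻¹ : ℝ) : ℂ)
    have hc : Complex.normSq c * r = 1 := by
      rw [Complex.normSq_ofReal, ← sq, inv_pow, Real.sq_sqrt hpos.le, inv_mul_cancel₀ hpos.ne']
    have hnorm : ∑ a, Complex.normSq ((c • w) a) = 1 := by
      simp only [Pi.smul_apply, smul_eq_mul, Complex.normSq_mul, ← Finset.mul_sum, ← hr, hc]
    have hscale : vecMulVec w (star w) = r • vecMulVec (c • w) (star (c • w)) := by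
      rw [star_smul, smul_vecMulVec, vecMulVec_smul, smul_smul, Complex.star_def,
        Complex.mul_conj, ← Complex.coe_smul, smul_smul, ← Complex.ofReal_mul, mul_comm, hc,
        Complex.ofReal_one, one_smul]
    rw [hscale]
    exact PointedCone.smul_mem _ hpos.le (PointedCone.subset_hull ⟨c • w, ⟨hV c w hw, hnorm⟩, rfl⟩)

lemma Matrix.PosSemidef.exists_trace_eq_ofReal {C : Matrix α α ℂ} (hC : C.PosSemidef) :
    ∃ c : ℝ, 0 ≤ c ∧ C.trace = c := by
  obtain ⟨c, hc, hCtr⟩ := RCLike.nonneg_iff_exists_ofReal.mp hC.trace_nonneg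
  exact ⟨c, hc, hCtr.symm⟩

lemma Matrix.PosSemidef.inv_smul_posSemidef_and_trace_eq_one {C : Matrix α α ℂ}
    (hC : C.PosSemidef) {c : ℝ} (hc : 0 < c) (hCtr : C.trace = c) :
    (c⁻¹ • C).PosSemidef ∧ (c⁻¹ • C).trace = 1 := by
  refine ⟨hC.smul (inv_nonneg.2 hc.le), ?_⟩
  rw [trace_smul, hCtr, Complex.real_smul, Complex.ofReal_inv,
    inv_mul_cancel₀ (by exact_mod_cast hc.ne')]

def robustnessSet (C : PointedCone ℝ (Matrix α α ℂ)) (ρ : Matrix α α ℂ) : Set ℝ :=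
  {t | 0 ≤ t ∧ ∃ D ∈ C, D.trace = t ∧ ρ + D ∈ C}

lemma robustnessSet_eq_setOf {C : PointedCone ℝ (Matrix α α ℂ)} (hC : ∀ D ∈ C, D.PosSemidef)
    {ρ : Matrix α α ℂ} (hρ : ρ.trace = 1) :
    robustnessSet C ρ = {t : ℝ | 0 ≤ t ∧ ∃ σ, (σ ∈ C ∧ σ.trace = 1) ∧
      (((1 + t : ℝ) : ℂ)⁻¹ • (ρ + (t : ℂ) • σ) ∈ C ∧
        (((1 + t : ℝ) : ℂ)⁻¹ • (ρ + (t : ℂ) • σ)).trace = 1)} := by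
  ext t
  constructor
  · rintro ⟨ht, D, hD, hDtr, hρD⟩
    rcases ht.eq_or_lt with rfl | ht
    · obtain rfl : D = 0 := (hC D hD).trace_eq_zero_iff.mp (by simpa using hDtr)
      rw [add_zero] at hρD
      exact ⟨le_rfl, ρ, ⟨hρD, hρ⟩, by simpa using hρD, by simpa using hρ⟩
    · have hD' : (t : ℂ) • (t⁻¹ • D) = D := by
        rw [Complex.coe_smul, smul_smul, mul_inv_cancel₀ ht.ne', one_smul]
      refine ⟨ht.le, t⁻¹ • D, ⟨C.smul_mem (inv_nonneg.2 ht.le) hD, ?_⟩, ?_, ?_⟩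
      · rw [trace_smul, hDtr, Complex.real_smul, Complex.ofReal_inv,
          inv_mul_cancel₀ (by exact_mod_cast ht.ne')]
      · rw [hD', ← Complex.ofReal_inv, Complex.coe_smul]
        exact C.smul_mem (by positivity) hρD
      · rw [hD', trace_smul, trace_add, hρ, hDtr, smul_eq_mul, ← Complex.ofReal_one,
          ← Complex.ofReal_add, ← Complex.ofReal_inv, ← Complex.ofReal_mul,
          inv_mul_cancel₀ (by positivity), Complex.ofReal_one]
  · rintro ⟨ht, σ, ⟨hσ, hσtr⟩, hτ, -⟩
    refine ⟨ht, t • σ, C.smul_mem ht hσ, by simp [trace_smul, hσtr], ?_⟩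
    have h1t : (1 + t : ℝ) ≠ 0 := by positivity
    convert C.smul_mem (by positivity : (0 : ℝ) ≤ 1 + t) hτ using 1
    rw [← Complex.coe_smul, ← Complex.coe_smul, smul_smul,
      mul_inv_cancel₀ (by exact_mod_cast h1t), one_smul]

end Cone

section Infimum

variable {ι : Type*} [Fintype ι] {p : ι → ℝ} {S : Set ℝ} {T : ι → Set ℝ}

lemma csInf_le_sum_mul_csInf (hp : ∀ i, 0 ≤ p i) (hpsum : ∑ i, p i = 1) (hS : BddBelow S)
    (hT : ∀ i, (T i).Nonempty)
    (hmem : ∀ t : ι → ℝ, (∀ i, t i ∈ T i) → ∑ i, p i * t i ∈ S) :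
    sInf S ≤ ∑ i, p i * sInf (T i) := by
  refine le_of_forall_pos_le_add fun ε hε => ?_
  choose t ht hlt using fun i => exists_lt_of_csInf_lt (hT i) (lt_add_of_pos_right _ hε)
  calc sInf S ≤ ∑ i, p i * t i := csInf_le hS (hmem t ht)
    _ ≤ ∑ i, p i * (sInf (T i) + ε) :=
        Finset.sum_le_sum fun i _ => mul_le_mul_of_nonneg_left (hlt i).le (hp i)
    _ = ∑ i, p i * sInf (T i) + ε := by
        simp only [mul_add, Finset.sum_add_distrib, ← Finset.sum_mul, hpsum, one_mul]

lemma sum_mul_csInf_le (hp : ∀ i, 0 ≤ p i) (hT : ∀ i, BddBelow (T i)) {d : ι → ℝ}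
    (hd : ∀ i, 0 ≤ d i) (hdiv : ∀ i, 0 < p i → d i / p i ∈ T i) :
    ∑ i, p i * sInf (T i) ≤ ∑ i, d i := by
  refine Finset.sum_le_sum fun i _ => ?_
  rcases (hp i).eq_or_lt with h0 | hpos
  · simpa [← h0] using hd i
  · calc p i * sInf (T i) ≤ p i * (d i / p i) :=
          mul_le_mul_of_nonneg_left (csInf_le (hT i) (hdiv i hpos)) hpos.le
      _ = d i := mul_div_cancel₀ _ hpos.ne'

lemma csInf_eq_sum_mul_csInf (hp : ∀ i, 0 ≤ p i) (hpsum : ∑ i, p i = 1)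
    (hS : BddBelow S) (hT : ∀ i, (T i).Nonempty) (hTbdd : ∀ i, BddBelow (T i))
    (hmem : ∀ t : ι → ℝ, (∀ i, t i ∈ T i) → ∑ i, p i * t i ∈ S)
    (hsplit : ∀ s ∈ S, ∃ d : ι → ℝ, (∀ i, 0 ≤ d i) ∧ ∑ i, d i = s ∧
      ∀ i, 0 < p i → d i / p i ∈ T i) :
    sInf S = ∑ i, p i * sInf (T i) := by
  refine le_antisymm (csInf_le_sum_mul_csInf hp hpsum hS hT hmem) (le_csInf ?_ fun s hs => ?_)
  · choose t ht using hT
    exact ⟨_, hmem t ht⟩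
  · obtain ⟨d, hd, rfl, hdiv⟩ := hsplit s hs
    exact sum_mul_csInf_le hp hTbdd hd hdiv

end Infimum

section Kronecker

variable {I J : Type*}

def kronVec (x : I → ℂ) (y : J → ℂ) : I × J → ℂ := fun b => x b.1 * y b.2

lemma vecMulVec_kronVec (x : I → ℂ) (y : J → ℂ) :
    vecMulVec (kronVec x y) (star (kronVec x y)) =
      vecMulVec x (star x) ⊗ₖ vecMulVec y (star y) := by
  ext ⟨i, j⟩ ⟨i', j'⟩
  simp only [kronVec, vecMulVec_apply, kronecker_apply, Pi.star_apply, star_mul']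
  ring

variable [Fintype I] [Fintype J]

variable (I J) in
noncomputable def kronCone : PointedCone ℝ (Matrix (I × J) (I × J) ℂ) :=
  PointedCone.hull ℝ {A ⊗ₖ B | (A : Matrix I I ℂ) (B : Matrix J J ℂ)
    (_ : A.PosSemidef ∧ A.trace = 1) (_ : B.PosSemidef ∧ B.trace = 1)}

lemma kronSep_iff (ρ : Matrix (I × J) (I × J) ℂ) : KronSep ρ ↔ ρ ∈ kronCone I J ∧ ρ.trace = 1 := by
  rw [kronCone, ← exists_convexComb_iff]
  · constructor
    · rintro ⟨n, lam, A, B, hlam, hsum, hA, hB, rfl⟩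
      exact ⟨n, lam, fun t => A t ⊗ₖ B t, hlam, hsum, fun t => ⟨A t, B t, hA t, hB t, rfl⟩, rfl⟩
    · rintro ⟨n, lam, g, hlam, hsum, hg, rfl⟩
      choose A B hA hB hAB using hg
      exact ⟨n, lam, A, B, hlam, hsum, hA, hB, by simp_rw [hAB]⟩
  · rintro _ ⟨A, B, hA, hB, rfl⟩
    rw [trace_kronecker, hA.2, hB.2, one_mul]

lemma posSemidef_of_mem_kronCone {D : Matrix (I × J) (I × J) ℂ} (hD : D ∈ kronCone I J) :
    D.PosSemidef :=
  posSemidef_of_mem_hull (by rintro _ ⟨A, B, hA, hB, rfl⟩; exact hA.1.kronecker hB.1) hD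

lemma kronecker_mem_kronCone {A : Matrix I I ℂ} {B : Matrix J J ℂ} (hA : A.PosSemidef)
    (hB : B.PosSemidef) : A ⊗ₖ B ∈ kronCone I J := by
  obtain ⟨a, ha, hAtr⟩ := hA.exists_trace_eq_ofReal
  obtain ⟨b, hb, hBtr⟩ := hB.exists_trace_eq_ofReal
  rcases ha.eq_or_lt with rfl | ha
  · simp [hA.trace_eq_zero_iff.mp (by simpa using hAtr), zero_mem]
  rcases hb.eq_or_lt with rfl | hb
  · simp [hB.trace_eq_zero_iff.mp (by simpa using hBtr), zero_mem]
  have : A ⊗ₖ B = (a * b) • ((a⁻¹ • A) ⊗ₖ (b⁻¹ • B)) := by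
    rw [smul_kronecker, kronecker_smul, smul_smul, smul_smul,
      show a * b * a⁻¹ * b⁻¹ = 1 by field_simp, one_smul]
  rw [this]
  exact PointedCone.smul_mem _ (by positivity) (PointedCone.subset_hull
    ⟨_, _, hA.inv_smul_posSemidef_and_trace_eq_one ha hAtr,
      hB.inv_smul_posSemidef_and_trace_eq_one hb hBtr, rfl⟩)

lemma mem_span_kronecker_vecMulVec (M : Matrix (I × J) (I × J) ℂ) :
    M ∈ Submodule.span ℂ (Set.range fun xy : (I → ℂ) × (J → ℂ) =>
      vecMulVec xy.1 (star xy.1) ⊗ₖ vecMulVec xy.2 (star xy.2)) := by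
  classical
  have hrange : (Set.range fun xy : (I → ℂ) × (J → ℂ) =>
      vecMulVec xy.1 (star xy.1) ⊗ₖ vecMulVec xy.2 (star xy.2)) =
      Set.image2 (fun (A : Matrix I I ℂ) (B : Matrix J J ℂ) => kroneckerBilinear (R := ℂ) A B)
        (Set.range fun x : I → ℂ => vecMulVec x (star x))
        (Set.range fun y : J → ℂ => vecMulVec y (star y)) := by
    ext; simp [Set.mem_image2, kroneckerBilinear]
  rw [hrange, ← Submodule.map₂_span_span, matrix_eq_sum_single M]
  refine sum_mem fun a _ => sum_mem fun b _ => ?_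
  rw [← mul_one (M a b), ← single_kronecker_single]
  exact Submodule.apply_mem_map₂ _ (single_mem_span_vecMulVec_self_star _ _ _)
    (single_mem_span_vecMulVec_self_star _ _ _)

lemma exists_add_mem_kronCone {M : Matrix (I × J) (I × J) ℂ} (hM : M.IsHermitian) :
    ∃ D ∈ kronCone I J, M + D ∈ kronCone I J := by
  have hle : PointedCone.hull ℝ (Set.range fun xy : (I → ℂ) × (J → ℂ) =>
      vecMulVec xy.1 (star xy.1) ⊗ₖ vecMulVec xy.2 (star xy.2)) ≤ kronCone I J :=
    Submodule.span_le.mpr <| by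
      rintro _ ⟨xy, rfl⟩
      exact kronecker_mem_kronCone (posSemidef_vecMulVec_self_star _)
        (posSemidef_vecMulVec_self_star _)
  obtain ⟨D, hD, hMD⟩ := exists_add_mem_hull_of_mem_span
    (by rintro _ ⟨xy, rfl⟩; exact ((posSemidef_vecMulVec_self_star _).kronecker
      (posSemidef_vecMulVec_self_star _)).isHermitian) hM (mem_span_kronecker_vecMulVec M)
  exact ⟨D, hle hD, hle hMD⟩

lemma robustnessSet_kronCone_nonempty
    {M : Matrix (I × J) (I × J) ℂ} (hM : M.IsHermitian) :
    (robustnessSet (kronCone I J) M).Nonempty := by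
  obtain ⟨D, hD, hMD⟩ := exists_add_mem_kronCone hM
  obtain ⟨d, hd, hDtr⟩ := (posSemidef_of_mem_kronCone hD).exists_trace_eq_ofReal
  exact ⟨d, hd, D, hD, hDtr, hMD⟩

lemma kronCone_le_hull_kronVec : kronCone I J ≤ PointedCone.hull ℝ
    (Set.range fun xy : (I → ℂ) × (J → ℂ) =>
      vecMulVec (kronVec xy.1 xy.2) (star (kronVec xy.1 xy.2))) := by
  refine Submodule.span_le.mpr ?_
  rintro _ ⟨A, B, ⟨hA, -⟩, ⟨hB, -⟩, rfl⟩
  obtain ⟨m, x, rfl⟩ := posSemidef_iff_eq_sum_vecMulVec.mp hA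
  obtain ⟨m', y, rfl⟩ := posSemidef_iff_eq_sum_vecMulVec.mp hB
  have : (∑ k, vecMulVec (x k) (star (x k))) ⊗ₖ (∑ l, vecMulVec (y l) (star (y l))) =
      ∑ k, ∑ l, vecMulVec (kronVec (x k) (y l)) (star (kronVec (x k) (y l))) := by
    simp only [vecMulVec_kronVec]
    ext ⟨i, j⟩ ⟨i', j'⟩
    simp only [kronecker_apply, Matrix.sum_apply, Finset.sum_mul_sum]
  rw [this]
  exact sum_mem fun k _ => sum_mem fun l _ => PointedCone.subset_hull ⟨(x k, y l), rfl⟩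

end Kronecker

section Block

lemma trace_eq_sum_trace_blockDiag' {ι : Type*} [Fintype ι] {m : ι → Type*} [∀ i, Fintype (m i)]
    (M : Matrix (Σ i, m i) (Σ i, m i) ℂ) : M.trace = ∑ i, (blockDiag' M i).trace := by
  simp only [trace, diag, blockDiag'_apply, Fintype.sum_sigma]

variable {K : Type*} {I J : K → Type*}

def IsBlockProduct (v : (Σ κ, I κ × J κ) → ℂ) : Prop :=
  ∃ (κ : K) (x : I κ → ℂ) (y : J κ → ℂ),
    (∀ i j, v ⟨κ, (i, j)⟩ = x i * y j) ∧ ∀ κ' ≠ κ, ∀ b, v ⟨κ', b⟩ = 0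

lemma IsBlockProduct.smul {v : (Σ κ, I κ × J κ) → ℂ} (hv : IsBlockProduct v) (c : ℂ) :
    IsBlockProduct (c • v) := by
  obtain ⟨κ, x, y, hxy, h0⟩ := hv
  exact ⟨κ, c • x, y, fun i j => by simp [hxy, mul_assoc], fun κ' h b => by simp [h0 κ' h b]⟩

lemma IsBlockProduct.exists_eq_kronVec {v : (Σ κ, I κ × J κ) → ℂ} (hv : IsBlockProduct v)
    (κ : K) : ∃ x y, (fun b => v ⟨κ, b⟩) = kronVec x y := by
  obtain ⟨κ₀, x, y, hxy, h0⟩ := hv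
  by_cases h : κ = κ₀
  · subst h
    exact ⟨x, y, funext fun b => hxy b.1 b.2⟩
  · exact ⟨0, 0, funext fun b => by simp [h0 κ h b, kronVec]⟩

noncomputable def extendBlock (κ : K) (u : I κ × J κ → ℂ) : (Σ κ, I κ × J κ) → ℂ :=
  Function.extend (Sigma.mk κ) u 0

lemma extendBlock_apply_self (κ : K) (u : I κ × J κ → ℂ) (b : I κ × J κ) :
    extendBlock κ u ⟨κ, b⟩ = u b :=
  (sigma_mk_injective (β := fun κ => I κ × J κ)).extend_apply u 0 b

lemma extendBlock_apply_of_ne {κ κ' : K} (u : I κ × J κ → ℂ) (h : κ' ≠ κ) (b : I κ' × J κ') :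
    extendBlock κ u ⟨κ', b⟩ = 0 :=
  Function.extend_apply' _ _ _ fun ⟨_, ha⟩ => h (congrArg Sigma.fst ha).symm

lemma isBlockProduct_extendBlock (κ : K) (x : I κ → ℂ) (y : J κ → ℂ) :
    IsBlockProduct (extendBlock κ (kronVec x y)) :=
  ⟨κ, x, y, fun i j => extendBlock_apply_self κ _ (i, j),
    fun _ h b => extendBlock_apply_of_ne _ h b⟩

section

variable [DecidableEq K]

lemma embedBlock_eq_blockDiagonal' (κ : K) (A : Matrix (I κ × J κ) (I κ × J κ) ℂ) :
    embedBlock κ A = blockDiagonal' (Pi.single κ A) := by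
  ext ⟨κ₁, b₁⟩ ⟨κ₂, b₂⟩
  by_cases h₁ : κ₁ = κ
  · subst h₁
    by_cases h₂ : κ₂ = κ₁
    · subst h₂; simp [embedBlock, blockDiagonal'_apply]
    · simp [embedBlock, blockDiagonal'_apply, h₂, Ne.symm h₂]
  · simp [embedBlock, blockDiagonal'_apply, h₁]

lemma blockDiagonal'_single_vecMulVec (κ : K) (u : I κ × J κ → ℂ) :
    blockDiagonal' (Pi.single κ (vecMulVec u (star u))) =
      vecMulVec (extendBlock κ u) (star (extendBlock κ u)) := by
  ext ⟨κ₁, b₁⟩ ⟨κ₂, b₂⟩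
  by_cases h₁ : κ₁ = κ
  · subst h₁
    by_cases h₂ : κ₂ = κ₁
    · subst h₂
      simp [blockDiagonal'_apply, vecMulVec_apply, extendBlock_apply_self]
    · simp [blockDiagonal'_apply, vecMulVec_apply, extendBlock_apply_of_ne u h₂, Ne.symm h₂]
  · simp [blockDiagonal'_apply, vecMulVec_apply, extendBlock_apply_of_ne u h₁, h₁]

lemma sum_smul_embedBlock [Fintype K] (c : K → ℂ) (A : ∀ κ, Matrix (I κ × J κ) (I κ × J κ) ℂ) :
    ∑ κ, c κ • embedBlock κ (A κ) = blockDiagonal' fun κ => c κ • A κ := by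
  simp_rw [embedBlock_eq_blockDiagonal', ← blockDiagonal'_smul, ← Pi.single_smul,
    ← blockDiagonal'AddMonoidHom_apply, ← map_sum, Finset.univ_sum_single]

end

variable [Fintype K] [∀ κ, Fintype (I κ)] [∀ κ, Fintype (J κ)]

variable (K I J) in
noncomputable def blockCone : PointedCone ℝ (Matrix (Σ κ, I κ × J κ) (Σ κ, I κ × J κ) ℂ) :=
  PointedCone.hull ℝ {vecMulVec v (star v) | (v) (_ : IsBlockProduct v ∧
    ∑ a, Complex.normSq (v a) = 1)}

lemma blockSep_iff (ρ : Matrix (Σ κ, I κ × J κ) (Σ κ, I κ × J κ) ℂ) :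
    BlockSep ρ ↔ ρ ∈ blockCone K I J ∧ ρ.trace = 1 := by
  rw [blockCone, ← exists_convexComb_iff]
  · constructor
    · rintro ⟨n, lam, v, hlam, hsum, hnorm, hv, rfl⟩
      exact ⟨n, lam, fun t => vecMulVec (v t) (star (v t)), hlam, hsum,
        fun t => ⟨v t, ⟨hv t, hnorm t⟩, rfl⟩, rfl⟩
    · rintro ⟨n, lam, g, hlam, hsum, hg, rfl⟩
      choose v hv hvg using hg
      exact ⟨n, lam, v, hlam, hsum, fun t => (hv t).2, fun t => (hv t).1, by simp_rw [← hvg]; rfl⟩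
  · rintro _ ⟨v, ⟨-, hv⟩, rfl⟩
    rw [trace_vecMulVec_self_star, hv, Complex.ofReal_one]

lemma posSemidef_of_mem_blockCone {D : Matrix (Σ κ, I κ × J κ) (Σ κ, I κ × J κ) ℂ}
    (hD : D ∈ blockCone K I J) : D.PosSemidef :=
  posSemidef_of_mem_hull (by rintro _ ⟨v, -, rfl⟩; exact posSemidef_vecMulVec_self_star v) hD

lemma blockDiag'_mem_kronCone {D : Matrix (Σ κ, I κ × J κ) (Σ κ, I κ × J κ) ℂ}
    (hD : D ∈ blockCone K I J) (κ : K) : blockDiag' D κ ∈ kronCone (I κ) (J κ) := by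
  induction hD using Submodule.span_induction with
  | mem _ hg =>
    obtain ⟨v, ⟨hv, -⟩, rfl⟩ := hg
    obtain ⟨x, y, hxy⟩ := IsBlockProduct.exists_eq_kronVec hv κ
    change vecMulVec (fun b => v ⟨κ, b⟩) (star fun b => v ⟨κ, b⟩) ∈ _
    rw [hxy, vecMulVec_kronVec]
    exact kronecker_mem_kronCone (posSemidef_vecMulVec_self_star x)
      (posSemidef_vecMulVec_self_star y)
  | zero => simp [zero_mem]
  | add _ _ _ _ h₁ h₂ => simpa [blockDiag'_add] using add_mem h₁ h₂
  | smul c _ _ h => simpa [blockDiag'_smul] using Submodule.smul_mem _ c h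

variable [DecidableEq K]

lemma blockDiagonal'_single_mem_blockCone {κ : K} {A : Matrix (I κ × J κ) (I κ × J κ) ℂ}
    (hA : A ∈ kronCone (I κ) (J κ)) : blockDiagonal' (Pi.single κ A) ∈ blockCone K I J := by
  have hA' := kronCone_le_hull_kronVec hA
  clear hA
  induction hA' using Submodule.span_induction with
  | mem _ hg =>
    obtain ⟨⟨x, y⟩, rfl⟩ := hg
    rw [blockDiagonal'_single_vecMulVec]
    exact vecMulVec_mem_hull_of_smul_mem (V := {v | IsBlockProduct v}) (fun c _ hv => hv.smul c)
      (isBlockProduct_extendBlock κ x y)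
  | zero => simp [zero_mem]
  | add _ _ _ _ h₁ h₂ => simpa [Pi.single_add] using add_mem h₁ h₂
  | smul c _ _ h => simpa [Pi.single_smul, blockDiagonal'_smul] using Submodule.smul_mem _ c h

lemma blockDiagonal'_mem_blockCone {M : ∀ κ, Matrix (I κ × J κ) (I κ × J κ) ℂ}
    (hM : ∀ κ, M κ ∈ kronCone (I κ) (J κ)) : blockDiagonal' M ∈ blockCone K I J := by
  rw [← Finset.univ_sum_single M, ← blockDiagonal'AddMonoidHom_apply, map_sum]
  exact sum_mem fun κ _ => blockDiagonal'_single_mem_blockCone (hM κ)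

variable {p : K → ℝ} {ρb : ∀ κ, Matrix (I κ × J κ) (I κ × J κ) ℂ}

lemma sum_mul_mem_robustnessSet_blockDiagonal' (hp : ∀ κ, 0 ≤ p κ) {t : K → ℝ}
    (ht : ∀ κ, t κ ∈ robustnessSet (kronCone (I κ) (J κ)) (ρb κ)) :
    ∑ κ, p κ * t κ ∈
      robustnessSet (blockCone K I J) (blockDiagonal' fun κ => (p κ : ℂ) • ρb κ) := by
  choose ht0 D hD hDtr hρD using ht
  refine ⟨Finset.sum_nonneg fun κ _ => mul_nonneg (hp κ) (ht0 κ),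
    blockDiagonal' fun κ => (p κ : ℂ) • D κ, blockDiagonal'_mem_blockCone fun κ => ?_, ?_, ?_⟩
  · rw [Complex.coe_smul]
    exact (kronCone _ _).smul_mem (hp κ) (hD κ)
  · simp [trace_blockDiagonal', trace_smul, hDtr]
  · rw [← blockDiagonal'_add]
    refine blockDiagonal'_mem_blockCone fun κ => ?_
    rw [Pi.add_apply, ← smul_add, Complex.coe_smul]
    exact (kronCone _ _).smul_mem (hp κ) (hρD κ)

lemma exists_split_of_mem_robustnessSet_blockDiagonal' {t : ℝ}
    (ht : t ∈ robustnessSet (blockCone K I J) (blockDiagonal' fun κ => (p κ : ℂ) • ρb κ)) :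
    ∃ d : K → ℝ, (∀ κ, 0 ≤ d κ) ∧ ∑ κ, d κ = t ∧
      ∀ κ, 0 < p κ → d κ / p κ ∈ robustnessSet (kronCone (I κ) (J κ)) (ρb κ) := by
  obtain ⟨-, D, hD, hDtr, hρD⟩ := ht
  have hblock := blockDiag'_mem_kronCone hD
  choose d hd hdtr using fun κ => (posSemidef_of_mem_kronCone (hblock κ)).exists_trace_eq_ofReal
  refine ⟨d, hd, ?_, fun κ hpκ => ⟨div_nonneg (hd κ) hpκ.le, (p κ)⁻¹ • blockDiag' D κ,
    (kronCone _ _).smul_mem (inv_nonneg.2 hpκ.le) (hblock κ), ?_, ?_⟩⟩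
  · have : ((∑ κ, d κ : ℝ) : ℂ) = t := by
      simp_rw [Complex.ofReal_sum, ← hdtr, ← trace_eq_sum_trace_blockDiag', hDtr]
    exact_mod_cast this
  · rw [trace_smul, hdtr κ, Complex.real_smul, div_eq_inv_mul, Complex.ofReal_mul]
  · have h := (kronCone _ _).smul_mem (inv_nonneg.2 hpκ.le) (blockDiag'_mem_kronCone hρD κ)
    rwa [blockDiag'_add, blockDiag'_blockDiagonal', Pi.add_apply, smul_add, ← Complex.coe_smul,
      smul_smul, ← Complex.ofReal_mul, inv_mul_cancel₀ hpκ.ne', Complex.ofReal_one, one_smul] at h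

end Block

theorem robustness_of_block_diagonal_state_general
    {K : Type*} [Fintype K] [DecidableEq K] {I J : K → Type*}
    [∀ κ, Fintype (I κ)]
    [∀ κ, Fintype (J κ)]
    (ρ : Matrix ((κ : K) × (I κ × J κ)) ((κ : K) × (I κ × J κ)) ℂ)
    (htr : ρ.trace = 1)
    (p : K → ℝ) (hp : ∀ κ, 0 ≤ p κ) (hpsum : ∑ κ, p κ = 1)
    (ρb : (κ : K) → Matrix (I κ × J κ) (I κ × J κ) ℂ)
    (hbpsd : ∀ κ, (ρb κ).PosSemidef) (hbtr : ∀ κ, (ρb κ).trace = 1)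
    (hdec : ρ = ∑ κ, (p κ : ℂ) • embedBlock κ (ρb κ)) :
    sInf {t : ℝ | 0 ≤ t ∧ ∃ σ, BlockSep σ ∧
        BlockSep (((1 + t : ℝ) : ℂ)⁻¹ • (ρ + (t : ℂ) • σ))}
      = ∑ κ, p κ *
          sInf {t : ℝ | 0 ≤ t ∧ ∃ σκ, KronSep σκ ∧
            KronSep (((1 + t : ℝ) : ℂ)⁻¹ • (ρb κ + (t : ℂ) • σκ))} := by
  have hblocks : ∀ κ, robustnessSet (kronCone (I κ) (J κ)) (ρb κ) = _ := fun κ =>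
    robustnessSet_eq_setOf (fun _ => posSemidef_of_mem_kronCone) (hbtr κ)
  simp_rw [blockSep_iff, kronSep_iff, ← hblocks,
    ← robustnessSet_eq_setOf (fun _ => posSemidef_of_mem_blockCone) htr,
    hdec, sum_smul_embedBlock]
  exact csInf_eq_sum_mul_csInf hp hpsum ⟨0, fun _ hs => hs.1⟩
    (fun κ => robustnessSet_kronCone_nonempty (hbpsd κ).isHermitian)
    (fun _ => ⟨0, fun _ ht => ht.1⟩)
    (fun _ ht => sum_mul_mem_robustnessSet_blockDiagonal' hp ht)
    (fun _ hs => exists_split_of_mem_robustnessSet_blockDiagonal' hs)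

/-- paper's Proposition 4: for a block-diagonal state
`ρ = ∑_κ p_κ ρ̂_κ`, the robustness of `ρ` equals the weighted sum of the bipartite
robustnesses of its blocks: `R(ρ) = ∑_κ p_κ R(ρ_κ)`. -/
theorem robustness_of_block_diagonal_state
    {K : Type*} [Fintype K] [DecidableEq K] [Nonempty K] {I J : K → Type*}
    [∀ κ, Fintype (I κ)] [∀ κ, Nonempty (I κ)]
    [∀ κ, Fintype (J κ)] [∀ κ, Nonempty (J κ)]
    (ρ : Matrix ((κ : K) × (I κ × J κ)) ((κ : K) × (I κ × J κ)) ℂ)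
    (hpsd : ρ.PosSemidef) (htr : ρ.trace = 1)
    (p : K → ℝ) (hp : ∀ κ, 0 ≤ p κ) (hpsum : ∑ κ, p κ = 1)
    (ρb : (κ : K) → Matrix (I κ × J κ) (I κ × J κ) ℂ)
    (hbpsd : ∀ κ, (ρb κ).PosSemidef) (hbtr : ∀ κ, (ρb κ).trace = 1)
    (hdec : ρ = ∑ κ, (p κ : ℂ) • embedBlock κ (ρb κ)) :
    sInf {t : ℝ | 0 ≤ t ∧ ∃ σ, BlockSep σ ∧
        BlockSep (((1 + t : ℝ) : ℂ)⁻¹ • (ρ + (t : ℂ) • σ))}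
      = ∑ κ, p κ *
          sInf {t : ℝ | 0 ≤ t ∧ ∃ σκ, KronSep σκ ∧
            KronSep (((1 + t : ℝ) : ℂ)⁻¹ • (ρb κ + (t : ℂ) • σκ))} :=
  robustness_of_block_diagonal_state_general ρ htr p hp hpsum ρb hbpsd hbtr hdec
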